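/- arXiv:1509.00922 — 2 statements merged into one kernel-verified Lean document; each statement's English description precedes it below -/
import Mathlib

section
/- The risk of the check loss satisfies a quadratic separation condition: under the quantile regression assumptions there exists C > 0 such that for all sufficiently small δ > 0, sup_{‖θ−θ*‖>δ}{R(θ*) − R(θ)} ≤ −Cδ². -/
open Asymptotics
open scoped Topology

/-- Quadratic separation for the quantile-regression risk: for a convex risk with unique
minimizer `θ*`, positive definite quadratic term, and second-order Taylor expansion at
`θ*`, there is `C > 0` with `sup_{‖θ−θ*‖>δ}{R(θ*) − R(θ)} ≤ −Cδ²` for small `δ`. -/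
theorem stmt6 {d : ℕ} (R : EuclideanSpace ℝ (Fin d) → ℝ)
    (θs : EuclideanSpace ℝ (Fin d)) (Q : EuclideanSpace ℝ (Fin d) → ℝ)
    (hconv : ConvexOn ℝ Set.univ R)
    (hmin : ∀ θ, θ ≠ θs → R θs < R θ)
    (hQ : ∃ m > 0, ∀ v, m * ‖v‖ ^ 2 ≤ Q v)
    (htaylor : (fun θ => R θ - R θs - (1/2) * Q (θ - θs))
      =o[𝓝 θs] (fun θ => ‖θ - θs‖ ^ 2)) :
    ∃ C > 0, ∃ δ₀ > 0, ∀ δ ∈ Set.Ioo (0:ℝ) δ₀, ∀ θ,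
      ‖θ - θs‖ > δ → R θs - R θ ≤ -C * δ ^ 2 := by
  obtain ⟨m, hm, hQm⟩ := hQ
  have h := htaylor.def (show (0:ℝ) < m/4 by positivity)
  rw [Metric.eventually_nhds_iff] at h
  obtain ⟨ε, hε, hball⟩ := h
  refine ⟨m/4, by positivity, ε, hε, ?_⟩
  rintro δ ⟨hδ0, hδε⟩ θ hθ
  have hn : ‖θ - θs‖ > 0 := lt_trans hδ0 hθ
  set t : ℝ := δ / ‖θ - θs‖ with ht
  have ht0 : 0 < t := div_pos hδ0 hn
  have ht1 : t < 1 := (div_lt_one hn).mpr hθ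
  set θ' := θs + t • (θ - θs) with hθ'
  have hnorm : ‖θ' - θs‖ = δ := by
    have : θ' - θs = t • (θ - θs) := by rw [hθ']; abel
    rw [this, norm_smul, Real.norm_eq_abs, abs_of_pos ht0, ht]
    field_simp
  have hdist : dist θ' θs < ε := by
    rw [dist_eq_norm, hnorm]; exact hδε
  have hb := hball hdist
  rw [Real.norm_eq_abs, Real.norm_eq_abs, hnorm, abs_le] at hb
  have hQ' : m * δ ^ 2 ≤ Q (θ' - θs) := by
    have := hQm (θ' - θs); rwa [hnorm] at this
  have habs : |δ ^ 2| = δ ^ 2 := abs_of_nonneg (by positivity)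
  have hlow : m/4 * δ ^ 2 ≤ R θ' - R θs := by nlinarith [hb.1]
  have hc := hconv.2 (Set.mem_univ θs) (Set.mem_univ θ)
      (by linarith : (0:ℝ) ≤ 1 - t) (le_of_lt ht0) (by ring)
  have hcomb : (1 - t) • θs + t • θ = θ' := by
    rw [hθ']; module
  rw [hcomb] at hc
  have hpos : 0 < R θ - R θs := sub_pos.mpr (hmin θ (by
    intro hθe
    rw [hθe] at hθ
    simp at hθ
    linarith))
  simp only [smul_eq_mul] at hc
  have hkey : m/4 * δ ^ 2 ≤ t * (R θ - R θs) := by nlinarith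
  nlinarith [mul_pos (sub_pos.mpr ht1) hpos]
end

section
/- Denominator lower bound for Gibbs posteriors: if Π(S_n) ≥ c·exp(−n t_n) for S_n = {θ : R(θ)−R(θ*) < t_n} and, on an event of probability tending to one, |𝔾_n(ℓ_θ − ℓ_{θ*})| < √n t_n for all θ in a set S_n' ⊆ S_n with Π(S_n') ≥ Π(S_n)/2, then D_n = ∫ exp(−n{R_n(θ) − R_n(θ*)}) Π(dθ) ≥ (c/2) exp(−3 n t_n) on that event. -/
open MeasureTheory

/-- Denominator lower bound for Gibbs posteriors: if the prior charges the sublevel set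
`S_n` with mass at least `c·exp(−n t_n)`, and the empirical process is less than `√n t_n`
on a subset `S_n'` carrying at least half of that prior mass, then the Gibbs denominator
is at least `(c/2)·exp(−3 n t_n)`. -/
theorem stmt9 {𝕏 Θ : Type*} [MeasurableSpace 𝕏] [MeasurableSpace Θ]
    (P : Measure 𝕏) [IsProbabilityMeasure P]
    (prior : Measure Θ) [IsProbabilityMeasure prior]
    (ℓ : Θ → 𝕏 → ℝ) (θs : Θ) (Riskf : Θ → ℝ) (hRisk : ∀ θ, Riskf θ = ∫ x, ℓ θ x ∂P)
    (n : ℕ) (hn : 0 < n) (t c : ℝ) (ht : 0 < t) (hc : 0 < c)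
    (xn : Fin n → 𝕏)
    (Rn : Θ → ℝ) (hRn : ∀ θ, Rn θ = (n : ℝ)⁻¹ * ∑ i, ℓ θ (xn i))
    (S : Set Θ) (hS : S = {θ | Riskf θ - Riskf θs < t})
    (hprior : ENNReal.ofReal (c * Real.exp (-(n : ℝ) * t)) ≤ prior S)
    (S' : Set Θ) (hS'meas : MeasurableSet S') (hsub : S' ⊆ S)
    (hhalf : prior S / 2 ≤ prior S')
    (hemp : ∀ θ ∈ S',
      |Real.sqrt n * ((Rn θ - Rn θs) - (Riskf θ - Riskf θs))| < Real.sqrt n * t) :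
    ENNReal.ofReal ((c / 2) * Real.exp (-3 * (n : ℝ) * t))
      ≤ ∫⁻ θ, ENNReal.ofReal (Real.exp (-(n : ℝ) * (Rn θ - Rn θs))) ∂prior := by
  have hnpos : (0 : ℝ) < n := Nat.cast_pos.mpr hn
  have hsqrt : (0 : ℝ) < Real.sqrt n := Real.sqrt_pos.mpr hnpos
  -- pointwise bound on S'
  have hpt : ∀ θ ∈ S', Real.exp (-(2 * n) * t) ≤ Real.exp (-(n : ℝ) * (Rn θ - Rn θs)) := by
    intro θ hθ
    have h1 : |(Rn θ - Rn θs) - (Riskf θ - Riskf θs)| < t := by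
      have := hemp θ hθ
      rw [abs_mul, abs_of_pos hsqrt] at this
      exact lt_of_mul_lt_mul_left this hsqrt.le
    have h2 : Riskf θ - Riskf θs < t := by
      have := hsub hθ; rw [hS] at this; exact this
    have h3 : Rn θ - Rn θs < 2 * t := by
      have := abs_lt.mp h1
      linarith [this.2]
    apply Real.exp_le_exp.mpr
    have : -(2 * (n : ℝ)) * t = (n : ℝ) * (-(2 * t)) := by ring
    nlinarith
  -- key: exp(-2nt)*prior S' ≤ integral
  have key : ENNReal.ofReal (Real.exp (-(2 * n) * t)) * prior S'
      ≤ ∫⁻ θ, ENNReal.ofReal (Real.exp (-(n : ℝ) * (Rn θ - Rn θs))) ∂prior := by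
    calc ENNReal.ofReal (Real.exp (-(2 * n) * t)) * prior S'
        = ∫⁻ _ in S', ENNReal.ofReal (Real.exp (-(2 * n) * t)) ∂prior := by
          rw [setLIntegral_const]
      _ ≤ ∫⁻ θ in S', ENNReal.ofReal (Real.exp (-(n : ℝ) * (Rn θ - Rn θs))) ∂prior := by
          apply setLIntegral_mono' hS'meas
          intro θ hθ
          exact ENNReal.ofReal_le_ofReal (hpt θ hθ)
      _ ≤ ∫⁻ θ, ENNReal.ofReal (Real.exp (-(n : ℝ) * (Rn θ - Rn θs))) ∂prior :=
          setLIntegral_le_lintegral _ _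
  refine le_trans ?_ key
  have hmass : ENNReal.ofReal (c * Real.exp (-(n : ℝ) * t) / 2) ≤ prior S' := by
    refine le_trans ?_ hhalf
    rw [ENNReal.ofReal_div_of_pos (by norm_num)]
    gcongr
    simp
  calc ENNReal.ofReal ((c / 2) * Real.exp (-3 * (n : ℝ) * t))
      = ENNReal.ofReal (Real.exp (-(2 * n) * t) * (c * Real.exp (-(n : ℝ) * t) / 2)) := by
        congr 1
        have h := Real.exp_add (-(2*(n:ℝ))*t) (-(n:ℝ)*t)
        rw [show -(2*(n:ℝ))*t + -(n:ℝ)*t = -3*(n:ℝ)*t by ring] at h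
        rw [h]; ring
    _ = ENNReal.ofReal (Real.exp (-(2 * n) * t)) *
          ENNReal.ofReal (c * Real.exp (-(n : ℝ) * t) / 2) := by
        rw [ENNReal.ofReal_mul (Real.exp_pos _).le]
    _ ≤ ENNReal.ofReal (Real.exp (-(2 * n) * t)) * prior S' := by
        gcongr
end
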